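/- (Property 2(i), core inequality) Let l, u, E_A, E_B, ε be real numbers with 0 < l, l ≤ E_A ≤ u, l ≤ E_B ≤ u, and ε > 0, and let r_A < r_B be natural numbers. Set γ = u/l + ε. Then γ^{r_A} · E_A < γ^{r_B} · E_B. In particular, a chromosome of strictly higher Pareto rank always has strictly higher fitness f(Q) = γ^{rank(Q)} · 𝓔(Q), whenever all norm values 𝓔 in the generation lie in [l, u]. -/
import Mathlib

theorem higher_rank_higher_fitness
    (l u E_A E_B ε : ℝ) (hl : 0 < l)
    (hA : l ≤ E_A ∧ E_A ≤ u) (hB : l ≤ E_B ∧ E_B ≤ u)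
    (hε : 0 < ε) (r_A r_B : ℕ) (hr : r_A < r_B) :
    (u / l + ε) ^ r_A * E_A < (u / l + ε) ^ r_B * E_B := by
  obtain ⟨hA1, hA2⟩ := hA
  obtain ⟨hB1, hB2⟩ := hB
  have hul : l ≤ u := hA1.trans hA2
  have hγ1 : 1 < u / l + ε := by
    have : (1:ℝ) ≤ u / l := (one_le_div hl).mpr hul
    linarith
  have hγ0 : 0 < u / l + ε := by linarith
  have hpow : (u / l + ε) ^ (r_A + 1) ≤ (u / l + ε) ^ r_B :=
    pow_le_pow_right₀ hγ1.le hr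
  have hpA : 0 < (u / l + ε) ^ r_A := pow_pos hγ0 _
  calc (u / l + ε) ^ r_A * E_A ≤ (u / l + ε) ^ r_A * u := by nlinarith
    _ < (u / l + ε) ^ r_A * ((u / l + ε) * l) := by
        have : u < (u / l + ε) * l := by
          have : u / l * l = u := div_mul_cancel₀ u hl.ne'
          nlinarith
        nlinarith
    _ = (u / l + ε) ^ (r_A + 1) * l := by ring
    _ ≤ (u / l + ε) ^ r_B * l := by nlinarith
    _ ≤ (u / l + ε) ^ r_B * E_B := by nlinarith [pow_pos hγ0 r_B]
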